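/- arXiv:2208.13627 — 4 statements merged into one kernel-verified Lean document; each statement's English description precedes it below -/
import Mathlib

section
/- Let (x(t), y(t)) solve the extended shadowing equation with \|x(0)\| = 1, y(0) = 1, and set u(t) := r_0(t) + R\,x(t)/y(t). Then u(t) solves the shadowing equation u'(t) = \frac{r_0'(t)\cdot(u(t)-r_0(t))}{\|u(t)-r_0(t)\|^2}(u(t)-r_0(t)), and \|u(t)-r_0(t)\| \equiv R. -/
open Real
open scoped RealInnerProductSpace

/-- Grönwall-type vanishing lemma: if `|g'| ≤ B * |g|` and `g a = 0`, then `g b = 0` for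
`a ≤ b`. -/
lemma aux_gronwall_zero {g g' B : ℝ → ℝ}
    (hg : ∀ t, HasDerivAt g (g' t) t) (hB : Continuous B)
    (hbound : ∀ t, |g' t| ≤ B t * |g t|)
    {a b : ℝ} (hab : a ≤ b) (hga : g a = 0) : g b = 0 := by
  obtain ⟨K, hK⟩ := (isCompact_Icc (a := a) (b := b)).exists_bound_of_continuousOn
    hB.continuousOn
  have h := norm_le_gronwallBound_of_norm_deriv_right_le
    (f := g) (f' := g') (δ := 0) (K := K) (ε := 0) (a := a) (b := b)
    (fun t _ => (hg t).continuousAt.continuousWithinAt)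
    (fun t _ => (hg t).hasDerivWithinAt)
    (by simp [hga])
    (fun t ht => by
      have hBt : B t ≤ K := le_trans (le_abs_self _) (hK t (Set.Ico_subset_Icc_self ht))
      calc ‖g' t‖ = |g' t| := rfl
        _ ≤ B t * |g t| := hbound t
        _ ≤ K * ‖g t‖ + 0 := by
            rw [add_zero, Real.norm_eq_abs]
            exact mul_le_mul_of_nonneg_right hBt (abs_nonneg _))
  have hb := h b ⟨hab, le_refl b⟩
  rw [gronwallBound_ε0, zero_mul] at hb
  exact norm_le_zero_iff.mp hb

/-- If `(x, y)` solves the extended shadowing equation with `‖x 0‖ = 1`, `y 0 = 1`, then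
`u t := r0 t + R • (x t / y t)` solves the shadowing equation and `‖u t - r0 t‖ ≡ R`. -/
theorem extended_shadowing_gives_shadowing {d : ℕ} (R : ℝ) (hR : 0 < R)
    (r0 dr0 : ℝ → EuclideanSpace ℝ (Fin d))
    (hr0 : ∀ t, HasDerivAt r0 (dr0 t) t)
    (hr0c : Continuous dr0)
    (x : ℝ → EuclideanSpace ℝ (Fin d)) (y : ℝ → ℝ)
    (hx : ∀ t, HasDerivAt x (-(1 / R) • (y t • dr0 t)) t)
    (hy : ∀ t, HasDerivAt y (-(1 / R) * ⟪dr0 t, x t⟫) t)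
    (hx0 : ‖x 0‖ = 1) (hy0 : y 0 = 1)
    (u : ℝ → EuclideanSpace ℝ (Fin d))
    (hu : ∀ t, u t = r0 t + (R / y t) • x t) :
    (∀ t, HasDerivAt u
      ((⟪dr0 t, u t - r0 t⟫ / ‖u t - r0 t‖ ^ 2) • (u t - r0 t)) t) ∧
    (∀ t, ‖u t - r0 t‖ = R) := by
  have hRne : R ≠ 0 := ne_of_gt hR
  -- Step 1: `y t ^ 2 = ‖x t‖ ^ 2` for all `t`.
  set f : ℝ → ℝ := fun t => y t ^ 2 - ⟪x t, x t⟫ with hf_def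
  have hf : ∀ t, HasDerivAt f 0 t := by
    intro t
    have h1 := ((hy t).pow 2).sub (((hx t).inner ℝ (hx t)))
    refine HasDerivAt.congr_deriv h1 ?_
    simp only [inner_smul_left, inner_smul_right, real_inner_smul_left, real_inner_smul_right,
      map_neg, map_div₀, map_one, conj_trivial]
    rw [real_inner_comm (x t) (dr0 t)]
    ring
  have hfc : ∀ t, f t = 0 := by
    intro t
    have := is_const_of_deriv_eq_zero (f := f)
      (fun s => (hf s).differentiableAt) (fun s => (hf s).deriv) t 0
    rw [this, hf_def]
    simp only
    rw [hy0, real_inner_self_eq_norm_sq, hx0]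
    norm_num
  have hsq : ∀ t, y t ^ 2 = ‖x t‖ ^ 2 := by
    intro t
    have := hfc t
    rw [hf_def] at this
    simp only [real_inner_self_eq_norm_sq] at this
    linarith
  have habs : ∀ t, ‖x t‖ = |y t| := by
    intro t
    have h := hsq t
    have := abs_nonneg (y t)
    have := norm_nonneg (x t)
    nlinarith [sq_abs (y t)]
  -- Step 2: `y` never vanishes (Grönwall).
  set y' : ℝ → ℝ := fun t => -(1 / R) * ⟪dr0 t, x t⟫ with hy'_def
  set B : ℝ → ℝ := fun t => (1 / R) * ‖dr0 t‖ with hB_def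
  have hBc : Continuous B := continuous_const.mul hr0c.norm
  have hbound : ∀ t, |y' t| ≤ B t * |y t| := by
    intro t
    have h1 : |y' t| = (1 / R) * |⟪dr0 t, x t⟫| := by
      rw [hy'_def]
      rw [abs_mul, abs_neg, abs_of_pos (by positivity : (0:ℝ) < 1 / R)]
    rw [h1, hB_def]
    rw [mul_assoc]
    have h2 : |⟪dr0 t, x t⟫| ≤ ‖dr0 t‖ * ‖x t‖ := abs_real_inner_le_norm _ _
    rw [habs t] at h2
    exact mul_le_mul_of_nonneg_left h2 (by positivity)
  have hynz : ∀ t, y t ≠ 0 := by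
    intro t1 h0
    rcases le_or_gt t1 0 with h | h
    · have := aux_gronwall_zero hy hBc hbound h h0
      rw [hy0] at this; exact one_ne_zero this
    · -- reverse time
      set z : ℝ → ℝ := fun s => y (-s) with hz_def
      have hz : ∀ s, HasDerivAt z (-(y' (-s))) s := by
        intro s
        have h2 := (hy (-s)).comp s (hasDerivAt_neg s)
        have h3 : -(1 / R) * ⟪dr0 (-s), x (-s)⟫ * (-1) = -(y' (-s)) := by
          rw [hy'_def]; ring
        rw [h3] at h2
        exact h2
      have hzb : ∀ s, |(-(y' (-s)))| ≤ (B (-s)) * |z s| := by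
        intro s
        rw [abs_neg]
        exact hbound (-s)
      have h0' : z (-t1) = 0 := by simp [hz_def, h0]
      have := aux_gronwall_zero (g := z) (g' := fun s => -(y' (-s))) (B := fun s => B (-s))
        hz (hBc.comp continuous_neg) hzb (by linarith : -t1 ≤ 0) h0'
      rw [hz_def] at this
      simp only [neg_zero] at this
      rw [hy0] at this; exact one_ne_zero this
  -- Step 3: `y` is positive.
  have hypos : ∀ t, 0 < y t := by
    intro t
    by_contra hle
    push_neg at hle
    have hlt : y t < 0 := lt_of_le_of_ne hle (hynz t)
    have hcont : ContinuousOn y (Set.uIcc 0 t) :=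
      (fun s _ => ((hy s).continuousAt.continuousWithinAt))
    have h0mem : (0 : ℝ) ∈ Set.uIcc (y 0) (y t) := by
      rw [hy0]
      exact Set.mem_uIcc.mpr (Or.inr ⟨hlt.le, zero_le_one⟩)
    obtain ⟨s, _, hs⟩ := intermediate_value_uIcc hcont h0mem
    exact hynz s hs
  have hnx : ∀ t, ‖x t‖ = y t := by
    intro t; rw [habs t, abs_of_pos (hypos t)]
  -- Step 4: `u t - r0 t = (R / y t) • x t` and its norm is `R`.
  have hsub : ∀ t, u t - r0 t = (R / y t) • x t := by
    intro t; rw [hu t]; abel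
  have hnorm : ∀ t, ‖u t - r0 t‖ = R := by
    intro t
    rw [hsub t, norm_smul, Real.norm_eq_abs, abs_of_pos (div_pos hR (hypos t)), hnx t,
      div_mul_cancel₀ _ (hynz t)]
  refine ⟨?_, hnorm⟩
  -- Step 5: derivative of `u`.
  intro t
  have hc : HasDerivAt (fun s => R / y s) ((0 * y t - R * y' t) / y t ^ 2) t :=
    (hasDerivAt_const t R).div (hy t) (hynz t)
  have hsm : HasDerivAt (fun s => (R / y s) • x s)
      ((R / y t) • (-(1 / R) • (y t • dr0 t)) + ((0 * y t - R * y' t) / y t ^ 2) • x t) t :=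
    hc.smul (hx t)
  have hu' : HasDerivAt u
      (dr0 t + ((R / y t) • (-(1 / R) • (y t • dr0 t)) + ((0 * y t - R * y' t) / y t ^ 2) • x t)) t := by
    have heq : u = fun s => r0 s + (R / y s) • x s := funext hu
    rw [heq]
    exact (hr0 t).add hsm
  convert hu' using 1
  have hn : ‖(R / y t) • x t‖ = R := by rw [← hsub t]; exact hnorm t
  rw [hsub t, hn, real_inner_smul_right]
  set ip : ℝ := ⟪dr0 t, x t⟫ with hip_def
  have e1 : (R / y t) • (-(1 / R) • (y t • dr0 t)) = -dr0 t := by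
    rw [smul_smul, smul_smul]
    have h4 : R / y t * -(1 / R) * y t = -1 := by
      field_simp [hynz t]
    rw [h4, neg_one_smul]
  have e2 : (0 * y t - R * y' t) / y t ^ 2 = ip / y t ^ 2 := by
    have h5 : 0 * y t - R * y' t = ip := by
      show 0 * y t - R * (-(1 / R) * ip) = ip
      field_simp
      ring
    rw [h5]
  have e3 : R / y t * ip / R ^ 2 * (R / y t) = ip / y t ^ 2 := by
    field_simp [hynz t, hRne]
  rw [smul_smul, e3, e1, e2, add_neg_cancel_left]
end

section
/- Let the escaping curve be the unit circle r_0(t) = e^{it} and let 0 < R < 1. Then \theta^\pm_R := \mp\arccos(-R) are equilibria of the equation \phi' = -(\cos\phi + R)/R, and the corresponding shadowing curves r(t) = e^{it}(1 + R e^{i\theta^\pm_R}) satisfy r(t) = \sqrt{1-R^2}\, e^{i(t \mp \arcsin R)}; in particular |r(t)| = \sqrt{1-R^2} for all t. -/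
open Real Complex

lemma key_pos (R : ℝ) (hR0 : 0 ≤ R) (hR1 : R ≤ 1) :
    (1 : ℂ) + (R : ℂ) * Complex.exp ((Real.arccos (-R) : ℝ) * Complex.I) =
      (Real.sqrt (1 - R ^ 2) : ℂ) * Complex.exp (((Real.arcsin R : ℝ)) * Complex.I) := by
  have hs : Real.sin (Real.arccos (-R)) = Real.sqrt (1 - R ^ 2) := by
    simp [Real.sin_arccos]
  have hc : Real.cos (Real.arccos (-R)) = -R :=
    Real.cos_arccos (by linarith) (by linarith)
  have hc2 : Real.cos (Real.arcsin R) = Real.sqrt (1 - R ^ 2) := by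
    rw [Real.cos_arcsin]
  have hs2 : Real.sin (Real.arcsin R) = R :=
    Real.sin_arcsin (by linarith) (by linarith)
  have hsq : Real.sqrt (1 - R ^ 2) * Real.sqrt (1 - R ^ 2) = 1 - R ^ 2 := by
    exact Real.mul_self_sqrt (by nlinarith)
  apply Complex.ext <;>
    simp [Complex.exp_ofReal_mul_I_re, Complex.exp_ofReal_mul_I_im, hs, hc, hc2, hs2,
      Complex.add_re, Complex.add_im, Complex.mul_re, Complex.mul_im] <;> nlinarith

lemma key_neg (R : ℝ) (hR0 : 0 ≤ R) (hR1 : R ≤ 1) :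
    (1 : ℂ) + (R : ℂ) * Complex.exp ((-Real.arccos (-R) : ℝ) * Complex.I) =
      (Real.sqrt (1 - R ^ 2) : ℂ) * Complex.exp (((-Real.arcsin R : ℝ)) * Complex.I) := by
  have h := key_pos R hR0 hR1
  have := congrArg (starRingEnd ℂ) h
  simpa [map_add, map_mul, ← Complex.exp_conj, Complex.conj_I, Complex.conj_ofReal,
    mul_comm, neg_mul, mul_neg, Complex.ofReal_neg] using this

/-- For the unit-circle escaper and `0 < R < 1`, `θ±_R = ∓ arccos(-R)` are equilibria of
`φ' = -(cos φ + R)/R`, and the corresponding shadowing curves are circles of radius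
`√(1-R²)`, with phases `∓ arcsin R`. -/
theorem circular_shadowing_curves (R : ℝ) (hR0 : 0 < R) (hR1 : R < 1) :
    (-(Real.cos (-Real.arccos (-R)) + R) / R = 0) ∧
    (-(Real.cos (Real.arccos (-R)) + R) / R = 0) ∧
    (∀ t : ℝ, Complex.exp (t * Complex.I) *
        (1 + (R : ℂ) * Complex.exp ((-Real.arccos (-R) : ℝ) * Complex.I)) =
      (Real.sqrt (1 - R ^ 2) : ℂ) *
        Complex.exp (((t - Real.arcsin R : ℝ)) * Complex.I)) ∧
    (∀ t : ℝ, Complex.exp (t * Complex.I) *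
        (1 + (R : ℂ) * Complex.exp ((Real.arccos (-R) : ℝ) * Complex.I)) =
      (Real.sqrt (1 - R ^ 2) : ℂ) *
        Complex.exp (((t + Real.arcsin R : ℝ)) * Complex.I)) ∧
    (∀ t : ℝ, ‖Complex.exp (t * Complex.I) *
        (1 + (R : ℂ) * Complex.exp ((-Real.arccos (-R) : ℝ) * Complex.I))‖ =
      Real.sqrt (1 - R ^ 2)) ∧
    (∀ t : ℝ, ‖Complex.exp (t * Complex.I) *
        (1 + (R : ℂ) * Complex.exp ((Real.arccos (-R) : ℝ) * Complex.I))‖ =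
      Real.sqrt (1 - R ^ 2)) := by
  have hc : Real.cos (Real.arccos (-R)) = -R :=
    Real.cos_arccos (by linarith) (by linarith)
  have hkp := key_pos R hR0.le hR1.le
  have hkn := key_neg R hR0.le hR1.le
  have hnn : (0:ℝ) ≤ Real.sqrt (1 - R ^ 2) := Real.sqrt_nonneg _
  refine ⟨by rw [Real.cos_neg, hc]; ring, by rw [hc]; ring, ?_, ?_, ?_, ?_⟩
  · intro t
    rw [hkn, ← mul_assoc, mul_comm (Complex.exp _), mul_assoc, ← Complex.exp_add]
    push_cast; ring_nf
  · intro t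
    rw [hkp, ← mul_assoc, mul_comm (Complex.exp _), mul_assoc, ← Complex.exp_add]
    push_cast; ring_nf
  · intro t
    rw [hkn]
    simp [map_mul, Complex.norm_exp, _root_.abs_of_nonneg hnn]
  · intro t
    rw [hkp]
    simp [map_mul, Complex.norm_exp, _root_.abs_of_nonneg hnn]
end

section
/- For the unit circle escaping curve, the rotation number of the reduced shadowing equation \theta' = -\cos(\theta - t)/R is \rho(R) = 1 for 0 < R \le 1 and \rho(R) = 1 - \sqrt{R^2-1}/R for R \ge 1, where \rho(R) := \lim_{t\to\infty}\theta(t)/t for any solution \theta. -/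
open Real Filter Set
open scoped Topology

private lemma abs_cos_sub_cos_le (a b : ℝ) : |Real.cos a - Real.cos b| ≤ |a - b| := by
  rw [Real.cos_sub_cos, abs_mul, abs_mul]
  have h1 : |Real.sin ((a + b) / 2)| ≤ 1 :=
    abs_le.2 ⟨Real.neg_one_le_sin _, Real.sin_le_one _⟩
  have h2 : |Real.sin ((a - b) / 2)| ≤ |(a - b) / 2| := Real.abs_sin_le_abs
  calc |(-2 : ℝ)| * |Real.sin ((a + b) / 2)| * |Real.sin ((a - b) / 2)|
      ≤ 2 * 1 * |(a - b) / 2| := by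
        rw [abs_neg, abs_two]
        gcongr
    _ = |a - b| := by rw [abs_div, abs_two]; ring

private lemma field_lipschitz (R : ℝ) (hR : 0 < R) :
    LipschitzWith ⟨R⁻¹, inv_nonneg.2 hR.le⟩ (fun x : ℝ => -(R + Real.cos x) / R) := by
  apply LipschitzWith.of_dist_le_mul
  intro x y
  have h1 : -(R + Real.cos x) / R - -(R + Real.cos y) / R
      = (Real.cos y - Real.cos x) / R := by field_simp; ring
  rw [Real.dist_eq, Real.dist_eq, h1, abs_div, abs_of_pos hR]
  have h2 : |Real.cos y - Real.cos x| ≤ |x - y| := by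
    rw [abs_sub_comm x y]; exact _root_.abs_cos_sub_cos_le y x
  show |Real.cos y - Real.cos x| / R ≤ R⁻¹ * |x - y|
  rw [inv_mul_eq_div]
  gcongr

private lemma stay_le (R : ℝ) (hR : 0 < R) (φ : ℝ → ℝ)
    (hφ : ∀ t, HasDerivAt φ (-(R + Real.cos (φ t)) / R) t)
    (e : ℝ) (he : Real.cos e = -R) (h0 : φ 0 ≤ e) :
    ∀ t, 0 ≤ t → φ t ≤ e := by
  intro t₁ ht₁
  by_contra hcon
  push_neg at hcon
  have hcont : Continuous φ := by
    rw [continuous_iff_continuousAt]; exact fun t => (hφ t).continuousAt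
  set S : Set ℝ := Set.Icc 0 t₁ ∩ {t | φ t ≤ e} with hSdef
  have hS0 : (0 : ℝ) ∈ S := ⟨⟨le_refl 0, ht₁⟩, h0⟩
  have hSne : S.Nonempty := ⟨0, hS0⟩
  have hSbdd : BddAbove S := ⟨t₁, fun x hx => hx.1.2⟩
  have hSclosed : IsClosed S :=
    isClosed_Icc.inter (isClosed_le hcont continuous_const)
  have hsS : sSup S ∈ S := hSclosed.csSup_mem hSne hSbdd
  obtain ⟨hs1, hs2⟩ := hsS
  have hst : sSup S < t₁ :=
    lt_of_le_of_ne hs1.2 (fun h => absurd (h ▸ hs2) (not_le.2 hcon))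
  have hgt : ∀ u, u ∈ Set.Ioc (sSup S) t₁ → e < φ u := by
    intro u hu
    by_contra hle
    push_neg at hle
    have huS : u ∈ S := ⟨⟨le_trans hs1.1 hu.1.le, hu.2⟩, hle⟩
    exact absurd (le_csSup hSbdd huS) (not_le.2 hu.1)
  have hse : φ (sSup S) = e := by
    refine le_antisymm hs2 ?_
    have htend : Tendsto φ (𝓝[>] (sSup S)) (𝓝 (φ (sSup S))) :=
      (hcont.continuousAt).continuousWithinAt
    refine ge_of_tendsto htend ?_
    filter_upwards [Ioc_mem_nhdsGT_of_mem ⟨le_refl _, hst⟩] with u hu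
    exact (hgt u hu).le
  have huniq := ODE_solution_unique (v := fun _ x => -(R + Real.cos x) / R)
    (K := ⟨R⁻¹, inv_nonneg.2 hR.le⟩) (f := φ) (g := fun _ => e) (a := sSup S) (b := t₁)
    (fun _ => field_lipschitz R hR)
    (hcont.continuousOn)
    (fun u _ => (hφ u).hasDerivWithinAt)
    (continuousOn_const)
    (fun u _ => by
      show HasDerivWithinAt (fun _ => e) (-(R + Real.cos e) / R) (Set.Ici u) u
      have hz : -(R + Real.cos e) / R = 0 := by rw [he]; ring
      rw [hz]
      exact (hasDerivAt_const u e).hasDerivWithinAt)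
    hse
  have hfin : φ t₁ = e := huniq ⟨hst.le, le_refl t₁⟩
  exact absurd hfin (ne_of_gt hcon)

private lemma stay_ge (R : ℝ) (hR : 0 < R) (φ : ℝ → ℝ)
    (hφ : ∀ t, HasDerivAt φ (-(R + Real.cos (φ t)) / R) t)
    (e : ℝ) (he : Real.cos e = -R) (h0 : e ≤ φ 0) :
    ∀ t, 0 ≤ t → e ≤ φ t := by
  intro t₁ ht₁
  by_contra hcon
  push_neg at hcon
  have hcont : Continuous φ := by
    rw [continuous_iff_continuousAt]; exact fun t => (hφ t).continuousAt
  set S : Set ℝ := Set.Icc 0 t₁ ∩ {t | e ≤ φ t} with hSdef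
  have hS0 : (0 : ℝ) ∈ S := ⟨⟨le_refl 0, ht₁⟩, h0⟩
  have hSne : S.Nonempty := ⟨0, hS0⟩
  have hSbdd : BddAbove S := ⟨t₁, fun x hx => hx.1.2⟩
  have hSclosed : IsClosed S :=
    isClosed_Icc.inter (isClosed_le continuous_const hcont)
  have hsS : sSup S ∈ S := hSclosed.csSup_mem hSne hSbdd
  obtain ⟨hs1, hs2⟩ := hsS
  have hst : sSup S < t₁ :=
    lt_of_le_of_ne hs1.2 (fun h => absurd (h ▸ hs2) (not_le.2 hcon))
  have hgt : ∀ u, u ∈ Set.Ioc (sSup S) t₁ → φ u < e := by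
    intro u hu
    by_contra hle
    push_neg at hle
    have huS : u ∈ S := ⟨⟨le_trans hs1.1 hu.1.le, hu.2⟩, hle⟩
    exact absurd (le_csSup hSbdd huS) (not_le.2 hu.1)
  have hse : φ (sSup S) = e := by
    refine le_antisymm ?_ hs2
    have htend : Tendsto φ (𝓝[>] (sSup S)) (𝓝 (φ (sSup S))) :=
      (hcont.continuousAt).continuousWithinAt
    refine le_of_tendsto htend ?_
    filter_upwards [Ioc_mem_nhdsGT_of_mem ⟨le_refl _, hst⟩] with u hu
    exact (hgt u hu).le
  have huniq := ODE_solution_unique (v := fun _ x => -(R + Real.cos x) / R)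
    (K := ⟨R⁻¹, inv_nonneg.2 hR.le⟩) (f := φ) (g := fun _ => e) (a := sSup S) (b := t₁)
    (fun _ => field_lipschitz R hR)
    (hcont.continuousOn)
    (fun u _ => (hφ u).hasDerivWithinAt)
    (continuousOn_const)
    (fun u _ => by
      show HasDerivWithinAt (fun _ => e) (-(R + Real.cos e) / R) (Set.Ici u) u
      have hz : -(R + Real.cos e) / R = 0 := by rw [he]; ring
      rw [hz]
      exact (hasDerivAt_const u e).hasDerivWithinAt)
    hse
  have hfin : φ t₁ = e := huniq ⟨hst.le, le_refl t₁⟩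
  exact absurd hfin (ne_of_lt hcon)

/-- The explicit global antiderivative of `R/(R + cos x)` for `R > 1`. -/
private lemma hasDerivAt_F (R : ℝ) (hR : 1 < R) (x : ℝ) :
    HasDerivAt (fun x => (R / Real.sqrt (R ^ 2 - 1)) *
      (x - 2 * Real.arctan (Real.sin x / (Real.cos x + (R + Real.sqrt (R ^ 2 - 1))))))
      (R / (R + Real.cos x)) x := by
  set s := Real.sqrt (R ^ 2 - 1) with hsdef
  have hs2 : s ^ 2 = R ^ 2 - 1 := Real.sq_sqrt (by nlinarith)
  have hs : 0 < s := Real.sqrt_pos.2 (by nlinarith)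
  set c := R + s with hcdef
  have hden : ∀ y : ℝ, 0 < Real.cos y + c := fun y => by
    have := Real.neg_one_le_cos y; nlinarith
  set d := Real.cos x + c with hddef
  have hd : 0 < d := hden x
  have h1 : HasDerivAt (fun y => Real.sin y / (Real.cos y + c))
      ((Real.cos x * (Real.cos x + c) - Real.sin x * (-Real.sin x)) / (Real.cos x + c) ^ 2) x :=
    (Real.hasDerivAt_sin x).div (by simpa using (Real.hasDerivAt_cos x).add_const c) (ne_of_gt hd)
  have h2 := (Real.hasDerivAt_arctan (Real.sin x / (Real.cos x + c))).comp x h1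
  have h3 := ((hasDerivAt_id x).sub (h2.const_mul 2)).const_mul (R / s)
  refine h3.congr_deriv ?_
  symm
  have hsin : Real.sin x ^ 2 = 1 - Real.cos x ^ 2 := by
    have := Real.sin_sq_add_cos_sq x; nlinarith
  have hpos : 0 < R + Real.cos x := by have := Real.neg_one_le_cos x; nlinarith
  have e1 : 1 + (Real.sin x / d) ^ 2 = (2 * c * (R + Real.cos x)) / d ^ 2 := by
    field_simp
    linear_combination hsin + hs2
  have e2 : Real.cos x * (Real.cos x + c) - Real.sin x * (-Real.sin x) = 1 + c * Real.cos x := by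
    linear_combination hsin
  rw [← hddef] at e2 ⊢
  rw [e1, e2]
  have h2c : 0 < 2 * c * (R + Real.cos x) := by positivity
  have hcne : c ≠ 0 := by rw [hcdef]; positivity
  field_simp
  rw [hcdef]
  linarith [hs2]

/-- Case `R ≤ 1`: the phase `φ = θ - t` is trapped between equilibria, so `θ t / t → 1`. -/
private lemma case_le_one (R : ℝ) (hR : 0 < R) (hle : R ≤ 1) (θ : ℝ → ℝ)
    (hθ : ∀ t, HasDerivAt θ (-Real.cos (θ t - t) / R) t) :
    Tendsto (fun t => θ t / t) atTop (𝓝 1) := by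
  set φ : ℝ → ℝ := fun t => θ t - t with hφdef
  have hφ : ∀ t, HasDerivAt φ (-(R + Real.cos (φ t)) / R) t := by
    intro t
    have h := (hθ t).sub (hasDerivAt_id t)
    refine h.congr_deriv ?_
    symm
    field_simp
    ring
  set c := Real.arccos (-R) with hcdef
  have hc : Real.cos c = -R := Real.cos_arccos (by linarith) (by linarith)
  have hπ : (0 : ℝ) < 2 * π := by positivity
  set n : ℤ := ⌈(φ 0 - c) / (2 * π)⌉ with hndef
  set b := c + (n : ℝ) * (2 * π) with hbdef
  set a := c + ((n - 1 : ℤ) : ℝ) * (2 * π) with hadef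
  have hcb : Real.cos b = -R := by rw [hbdef, Real.cos_add_int_mul_two_pi, hc]
  have hca : Real.cos a = -R := by rw [hadef, Real.cos_add_int_mul_two_pi, hc]
  have hφ0b : φ 0 ≤ b := by
    have h := Int.le_ceil ((φ 0 - c) / (2 * π))
    rw [← hndef] at h
    have h2 : φ 0 - c ≤ (n : ℝ) * (2 * π) := (div_le_iff₀ hπ).1 h
    rw [hbdef]; linarith
  have haφ0 : a ≤ φ 0 := by
    have h := Int.ceil_lt_add_one ((φ 0 - c) / (2 * π))
    rw [← hndef] at h
    have h1 : ((n : ℝ) - 1) < (φ 0 - c) / (2 * π) := by linarith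
    have h2 : ((n : ℝ) - 1) * (2 * π) < φ 0 - c := (lt_div_iff₀ hπ).1 h1
    rw [hadef]; push_cast; linarith
  have hub := stay_le R hR φ hφ b hcb hφ0b
  have hlb := stay_ge R hR φ hφ a hca haφ0
  have hphi0 : Tendsto (fun t => φ t / t) atTop (𝓝 0) := by
    have hg : Tendsto (fun t : ℝ => (|a| + |b|) / t) atTop (𝓝 0) :=
      tendsto_const_nhds.div_atTop tendsto_id
    refine squeeze_zero_norm' ?_ hg
    filter_upwards [eventually_ge_atTop (1 : ℝ)] with t ht
    have ht0 : (0 : ℝ) < t := lt_of_lt_of_le one_pos ht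
    have h1 : |φ t| ≤ |a| + |b| := by
      rw [abs_le]
      constructor
      · have := hlb t ht0.le
        have := neg_abs_le a
        linarith [abs_nonneg b]
      · have := hub t ht0.le
        have := le_abs_self b
        linarith [abs_nonneg a]
    rw [Real.norm_eq_abs, abs_div, abs_of_pos ht0]
    gcongr
  have heq : (fun t => φ t / t + 1) =ᶠ[atTop] (fun t => θ t / t) := by
    filter_upwards [eventually_ne_atTop (0 : ℝ)] with t ht
    rw [hφdef]
    field_simp
    ring
  have := (hphi0.add tendsto_const_nhds).congr' heq
  simpa using this

/-- Case `R > 1`: `F(φ t) = F(φ 0) - t` with `F` the antiderivative of `R/(R+cos)`. -/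
private lemma case_gt_one (R : ℝ) (hlt : 1 < R) (θ : ℝ → ℝ)
    (hθ : ∀ t, HasDerivAt θ (-Real.cos (θ t - t) / R) t) :
    Tendsto (fun t => θ t / t) atTop (𝓝 (1 - Real.sqrt (R ^ 2 - 1) / R)) := by
  have hR : (0 : ℝ) < R := by linarith
  set φ : ℝ → ℝ := fun t => θ t - t with hφdef
  have hφ : ∀ t, HasDerivAt φ (-(R + Real.cos (φ t)) / R) t := by
    intro t
    have h := (hθ t).sub (hasDerivAt_id t)
    refine h.congr_deriv ?_
    symm
    field_simp
    ring
  set s := Real.sqrt (R ^ 2 - 1) with hsdef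
  have hs2 : s ^ 2 = R ^ 2 - 1 := Real.sq_sqrt (by nlinarith)
  have hs : 0 < s := Real.sqrt_pos.2 (by nlinarith)
  have hpos : ∀ y : ℝ, 0 < R + Real.cos y := fun y => by
    have := Real.neg_one_le_cos y; nlinarith
  set F : ℝ → ℝ := fun x =>
    (R / s) * (x - 2 * Real.arctan (Real.sin x / (Real.cos x + (R + s)))) with hFdef
  have hF : ∀ x, HasDerivAt F (R / (R + Real.cos x)) x := fun x => hasDerivAt_F R hlt x
  have hzero : ∀ t, HasDerivAt (fun t => F (φ t) + t) 0 t := by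
    intro t
    have h := ((hF (φ t)).comp t (hφ t)).add (hasDerivAt_id t)
    refine h.congr_deriv ?_
    symm
    have := hpos (φ t)
    field_simp
    ring
  have hconst : ∀ t, F (φ t) + t = F (φ 0) + 0 := fun t =>
    is_const_of_deriv_eq_zero (fun u => (hzero u).differentiableAt)
      (fun u => (hzero u).deriv) t 0
  have hFt : ∀ t, F (φ t) = F (φ 0) - t := fun t => by linarith [hconst t]
  have harctan : ∀ y : ℝ, |Real.arctan y| ≤ π / 2 := fun y =>
    abs_le.2 ⟨(Real.neg_pi_div_two_lt_arctan y).le, (Real.arctan_lt_pi_div_two y).le⟩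
  have hRs : 0 < R / s := by positivity
  have hbound : ∀ x, |F x - (R / s) * x| ≤ (R / s) * π := by
    intro x
    have h1 : F x - (R / s) * x
        = (R / s) * (-2 * Real.arctan (Real.sin x / (Real.cos x + (R + s)))) := by
      rw [hFdef]; ring
    rw [h1, abs_mul, abs_of_pos hRs]
    have h2 : |(-2 : ℝ) * Real.arctan (Real.sin x / (Real.cos x + (R + s)))| ≤ π := by
      rw [abs_mul, abs_neg, abs_two]
      have := harctan (Real.sin x / (Real.cos x + (R + s)))
      linarith
    gcongr
  have hsR : 0 < s / R := by positivity
  have hcore : ∀ t, |φ t - (s / R) * (F (φ 0) - t)| ≤ π := by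
    intro t
    have h1 := hbound (φ t)
    rw [hFt t] at h1
    have h2 : φ t - (s / R) * (F (φ 0) - t)
        = -((s / R) * ((F (φ 0) - t) - (R / s) * φ t)) := by
      field_simp
      ring
    rw [h2, abs_neg, abs_mul, abs_of_pos hsR]
    calc (s / R) * |(F (φ 0) - t) - (R / s) * φ t| ≤ (s / R) * ((R / s) * π) := by gcongr
      _ = π := by field_simp
  have hE : Tendsto (fun t => φ t / t - (s / R) * (F (φ 0) - t) / t) atTop (𝓝 0) := by
    have hg : Tendsto (fun t : ℝ => π / t) atTop (𝓝 0) :=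
      tendsto_const_nhds.div_atTop tendsto_id
    refine squeeze_zero_norm' ?_ hg
    filter_upwards [eventually_ge_atTop (1 : ℝ)] with t ht
    have ht0 : (0 : ℝ) < t := lt_of_lt_of_le one_pos ht
    rw [Real.norm_eq_abs, div_sub_div_same, abs_div, abs_of_pos ht0]
    gcongr
    exact hcore t
  have hmain : Tendsto (fun t => (s / R) * (F (φ 0) - t) / t) atTop (𝓝 (-(s / R))) := by
    have k1 : Tendsto (fun t : ℝ => ((s / R) * F (φ 0)) / t - s / R) atTop (𝓝 (0 - s / R)) :=
      (tendsto_const_nhds.div_atTop tendsto_id).sub_const (s / R)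
    rw [zero_sub] at k1
    apply k1.congr'
    filter_upwards [eventually_ne_atTop (0 : ℝ)] with t ht
    field_simp
  have hphi : Tendsto (fun t => φ t / t) atTop (𝓝 (-(s / R))) := by
    have h := hE.add hmain
    rw [zero_add] at h
    exact h.congr (fun t => by ring)
  have heq : (fun t => φ t / t + 1) =ᶠ[atTop] (fun t => θ t / t) := by
    filter_upwards [eventually_ne_atTop (0 : ℝ)] with t ht
    rw [hφdef]
    field_simp
    ring
  have h := (hphi.add tendsto_const_nhds).congr' heq
  convert h using 2
  ring

/-- For the unit-circle escaper, the rotation number of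
`θ' = -cos(θ - t)/R` equals `1` for `0 < R ≤ 1` and `1 - √(R²-1)/R` for `R ≥ 1`. -/
theorem rotation_number_unit_circle (R : ℝ) (hR : 0 < R)
    (θ : ℝ → ℝ)
    (hθ : ∀ t, HasDerivAt θ (-Real.cos (θ t - t) / R) t) :
    (R ≤ 1 → Tendsto (fun t => θ t / t) atTop (𝓝 1)) ∧
    (1 ≤ R → Tendsto (fun t => θ t / t) atTop
      (𝓝 (1 - Real.sqrt (R ^ 2 - 1) / R))) := by
  constructor
  · intro hle
    exact case_le_one R hR hle θ hθ
  · intro hge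
    rcases eq_or_lt_of_le hge with heq | hlt
    · have h1 := case_le_one R hR heq.ge θ hθ
      have h2 : Real.sqrt (R ^ 2 - 1) = 0 := by
        rw [← heq]; norm_num
      rw [h2]
      simpa using h1
    · exact case_gt_one R hlt θ hθ
end

section
/- Let p > q \ge 1 be coprime integers and R = p/\sqrt{p^2 - q^2}. Then R > 1, \sqrt{R^2-1}/R = q/p, and every shadowing curve r(t) = e^{it}(1 + Re^{i\phi(t)}) to the unit circle (with \phi' = -(\cos\phi+R)/R) is periodic with period 2p\pi: r(t + 2p\pi) = r(t) for all t. -/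
open Real Complex

private lemma hasDerivAt_Fphase (R b : ℝ) (hR : 1 < R) (hb : b = Real.sqrt (R ^ 2 - 1)) (x : ℝ) :
    HasDerivAt (fun y => (y - 2 * Real.arctan ((R - b) * Real.sin y /
        (1 + (R - b) * Real.cos y))) / b)
      (1 / (R + Real.cos x)) x := by
  have hb2 : b ^ 2 = R ^ 2 - 1 := by rw [hb]; exact Real.sq_sqrt (by nlinarith)
  have hbpos : 0 < b := by rw [hb]; exact Real.sqrt_pos.2 (by nlinarith)
  set k := R - b with hkdef
  have hk0 : 0 < k := by nlinarith
  have hk1 : k < 1 := by nlinarith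
  have hd : 0 < 1 + k * Real.cos x := by nlinarith [Real.neg_one_le_cos x, Real.cos_le_one x]
  have hsin : HasDerivAt (fun y => k * Real.sin y) (k * Real.cos x) x :=
    (Real.hasDerivAt_sin x).const_mul k
  have hden : HasDerivAt (fun y => 1 + k * Real.cos y) (k * -Real.sin x) x :=
    ((Real.hasDerivAt_cos x).const_mul k).const_add 1
  have hu : HasDerivAt (fun y => k * Real.sin y / (1 + k * Real.cos y))
      ((k * Real.cos x * (1 + k * Real.cos x) - k * Real.sin x * (k * -Real.sin x)) /
        (1 + k * Real.cos x) ^ 2) x := hsin.div hden hd.ne'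
  have harc := (Real.hasDerivAt_arctan (k * Real.sin x / (1 + k * Real.cos x))).comp x hu
  have hfull := ((hasDerivAt_id x).sub (harc.const_mul 2)).div_const b
  convert hfull using 1
  · rfl
  · rfl
  · rfl
  have hs2 : Real.sin x ^ 2 = 1 - Real.cos x ^ 2 := by
    nlinarith [Real.sin_sq_add_cos_sq x]
  have hRc : (0:ℝ) < R + Real.cos x := by nlinarith [Real.neg_one_le_cos x]
  have h1 : 1 + k ^ 2 = 2 * R * k := by nlinarith
  set s := Real.sin x
  set c := Real.cos x
  have hA : 1 + (k * s / (1 + k * c)) ^ 2 = 2 * k * (R + c) / (1 + k * c) ^ 2 := by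
    field_simp
    linear_combination h1 + k ^ 2 * hs2
  have hB : k * c * (1 + k * c) - k * s * (k * -s) = k * (c + k) := by
    linear_combination k ^ 2 * hs2
  rw [hA, hB]
  have hd2 : ((1 : ℝ) + k * c) ^ 2 ≠ 0 := pow_ne_zero 2 hd.ne'
  have e : 2*(1/(2*k*(R+c)/(1+k*c)^2) * (k*(c+k)/(1+k*c)^2)) = (c+k)/(R+c) := by
    field_simp
  rw [e, one_sub_div hRc.ne', div_div, div_eq_div_iff hRc.ne' (by positivity)]
  linear_combination (R + c) * hkdef

/-- For coprime integers `p > q ≥ 1` and `R = p/√(p²-q²)`, one has `R > 1`,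
`√(R²-1)/R = q/p`, and every shadowing curve to the unit circle is `2pπ`-periodic. -/
theorem subharmonic_shadowing_curves (p q : ℕ) (hq : 1 ≤ q) (hpq : q < p)
    (hcop : Nat.Coprime p q)
    (R : ℝ) (hRdef : R = p / Real.sqrt ((p : ℝ) ^ 2 - (q : ℝ) ^ 2)) :
    1 < R ∧ Real.sqrt (R ^ 2 - 1) / R = (q : ℝ) / p ∧
    ∀ φ : ℝ → ℝ, (∀ t, HasDerivAt φ (-(Real.cos (φ t) + R) / R) t) →
      ∀ r : ℝ → ℂ, (∀ t, r t = Complex.exp (t * Complex.I) *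
          (1 + (R : ℂ) * Complex.exp ((φ t : ℝ) * Complex.I))) →
        ∀ t, r (t + 2 * p * π) = r t := by
  have hq0 : (0:ℝ) < q := by exact_mod_cast hq
  have hqp : (q:ℝ) < p := by exact_mod_cast hpq
  have hp0 : (0:ℝ) < p := lt_trans hq0 hqp
  have hs : (0:ℝ) < (p:ℝ) ^ 2 - (q:ℝ) ^ 2 := by nlinarith
  have hsqpos : 0 < Real.sqrt ((p:ℝ) ^ 2 - (q:ℝ) ^ 2) := Real.sqrt_pos.2 hs
  have hsqlt : Real.sqrt ((p:ℝ) ^ 2 - (q:ℝ) ^ 2) < p :=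
    (Real.sqrt_lt' hp0).2 (by nlinarith)
  have hR1 : 1 < R := by
    rw [hRdef, lt_div_iff₀ hsqpos, one_mul]; exact hsqlt
  have hR0 : (0:ℝ) < R := lt_trans one_pos hR1
  have hsq2 : Real.sqrt ((p:ℝ) ^ 2 - (q:ℝ) ^ 2) ^ 2 = (p:ℝ) ^ 2 - (q:ℝ) ^ 2 :=
    Real.sq_sqrt hs.le
  have hR2 : R ^ 2 - 1 = (q:ℝ) ^ 2 / ((p:ℝ) ^ 2 - (q:ℝ) ^ 2) := by
    rw [hRdef, div_pow, hsq2]; field_simp; ring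
  have hRq : Real.sqrt (R ^ 2 - 1) = R * q / p := by
    rw [hR2, Real.sqrt_div (by positivity : (0:ℝ) ≤ (q:ℝ)^2),
      Real.sqrt_sq hq0.le, hRdef]
    field_simp
  have hpart2 : Real.sqrt (R ^ 2 - 1) / R = (q : ℝ) / p := by
    rw [hRq]; field_simp
  refine ⟨hR1, hpart2, ?_⟩
  intro φ hφ r hr t
  -- setup for the antiderivative
  set b := Real.sqrt (R ^ 2 - 1) with hb
  have hbpos : 0 < b := by rw [hRq]; positivity
  have hRne : R ≠ 0 := hR0.ne'
  have hpne : (p:ℝ) ≠ 0 := hp0.ne'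
  have hqne : (q:ℝ) ≠ 0 := hq0.ne'
  set F : ℝ → ℝ := fun y => (y - 2 * Real.arctan ((R - b) * Real.sin y /
      (1 + (R - b) * Real.cos y))) / b with hFdef
  have hF : ∀ x, HasDerivAt F (1 / (R + Real.cos x)) x := fun x =>
    hasDerivAt_Fphase R b hR1 hb x
  have hFmono : StrictMono F := by
    apply strictMono_of_deriv_pos
    intro x
    rw [(hF x).deriv]
    have : (0:ℝ) < R + Real.cos x := by nlinarith [Real.neg_one_le_cos x]
    positivity
  -- g is constant
  set g : ℝ → ℝ := fun u => R * F (φ u) + u with hgdef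
  have hg : ∀ u, HasDerivAt g 0 u := by
    intro u
    have hcomp := ((hF (φ u)).comp u (hφ u)).const_mul R
    have h2 := hcomp.add (hasDerivAt_id u)
    have hne : R + Real.cos (φ u) ≠ 0 := by nlinarith [Real.neg_one_le_cos (φ u)]
    convert h2 using 1
    · rfl
    · rfl
    · rfl
    field_simp
    ring
  have hgconst : ∀ u v : ℝ, g u = g v :=
    is_const_of_deriv_eq_zero (fun u => (hg u).differentiableAt)
      (fun u => (hg u).deriv)
  -- the quasi-periodicity of F
  have hFper : ∀ y : ℝ, F (y - 2 * q * π) = F y - 2 * π * p / R := by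
    intro y
    have hy : y - 2 * q * π = y - q * (2 * π) := by ring
    have hsin : Real.sin (y - 2 * q * π) = Real.sin y := by
      rw [hy]; exact Real.sin_periodic.sub_nat_mul_eq q
    have hcos : Real.cos (y - 2 * q * π) = Real.cos y := by
      rw [hy]; exact Real.cos_periodic.sub_nat_mul_eq q
    rw [hFdef]
    simp only [hsin, hcos]
    rw [hRq]
    field_simp
    ring
  -- main identity
  have h := hgconst (t + 2 * ↑p * π) t
  have h' : R * F (φ (t + 2 * ↑p * π)) + (t + 2 * ↑p * π) = R * F (φ t) + t := h
  have hkey : F (φ (t + 2 * ↑p * π)) = F (φ t - 2 * ↑q * π) := by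
    rw [hFper (φ t)]
    have h3 : R * F (φ (t + 2 * ↑p * π)) = R * (F (φ t) - 2 * π * ↑p / R) := by
      field_simp
      linarith [h']
    exact mul_left_cancel₀ hRne h3
  have hφeq : φ (t + 2 * ↑p * π) = φ t - 2 * ↑q * π := hFmono.injective hkey
  rw [hr, hr, hφeq]
  have e1 : ((t + 2 * ↑p * π : ℝ) : ℂ) * Complex.I =
      (t : ℂ) * Complex.I + ((p : ℤ) : ℂ) * (2 * ↑π * Complex.I) := by
    push_cast; ring
  have e2 : ((φ t - 2 * ↑q * π : ℝ) : ℂ) * Complex.I =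
      ((φ t : ℝ) : ℂ) * Complex.I + ((-(q:ℤ) : ℤ) : ℂ) * (2 * ↑π * Complex.I) := by
    push_cast; ring
  rw [e1, e2, Complex.exp_add, Complex.exp_add,
    Complex.exp_int_mul_two_pi_mul_I, Complex.exp_int_mul_two_pi_mul_I,
    mul_one, mul_one]
end
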